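/- arXiv:0807.2701 — 7 statements merged into one kernel-verified Lean document; each statement's English description precedes it below -/
import Mathlib

section
/- If a point p ∈ ℝ^n and a binary vector t ∈ F_2^n satisfy: there exists j in Supp(t) with p_j > Σ_{l ∈ Supp(t)\{j}} p_l, then p is not in the single parity polytope U(t). -/
open Finset

/-- Support of a binary vector. -/
def SuppZ {n : ℕ} (t : Fin n → ZMod 2) : Finset (Fin n) :=
  Finset.univ.filter (fun i => t i ≠ 0)

open Classical in
/-- Support of a real vector. -/
noncomputable def SuppR {n : ℕ} (p : Fin n → ℝ) : Finset (Fin n) :=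
  Finset.univ.filter (fun i => p i ≠ 0)

/-- Single parity polytope U(t). -/
def parityPolytope {n : ℕ} (t : Fin n → ZMod 2) : Set (Fin n → ℝ) :=
  {f | (∀ i, f i ∈ Set.Icc (0:ℝ) 1) ∧
    ∀ S ⊆ SuppZ t, Odd S.card →
      ∑ j ∈ S, f j + ∑ j ∈ SuppZ t \ S, (1 - f j) ≤ ((SuppZ t).card : ℝ) - 1}

/-- Fundamental polytope P(H). -/
def fundamentalPolytope {m n : ℕ} (H : Fin m → Fin n → ZMod 2) : Set (Fin n → ℝ) :=
  ⋂ i, parityPolytope (H i)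

/-- The binary linear code C(H). -/
def code {m n : ℕ} (H : Fin m → Fin n → ZMod 2) : Set (Fin n → ZMod 2) :=
  {x | ∀ i, ∑ j, x j * H i j = 0}

/-- Embedding of a binary vector into ℝ^n as a 0-1 vector. -/
def embed {n : ℕ} (x : Fin n → ZMod 2) : Fin n → ℝ := fun i => ((x i).val : ℝ)

/-- A vertex of a set: a point of the set not expressible as a proper convex
combination of two distinct points of the set. -/
def IsVertex {n : ℕ} (X : Set (Fin n → ℝ)) (f : Fin n → ℝ) : Prop :=
  f ∈ X ∧ ∀ g h : Fin n → ℝ, g ∈ X → h ∈ X → ∀ t : ℝ, 0 < t → t < 1 →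
    (f = fun i => t * g i + (1 - t) * h i) → g = h

theorem le_sum_sdiff_singleton_of_mem_parityPolytope {n : ℕ} {t : Fin n → ZMod 2}
    {f : Fin n → ℝ} (hf : f ∈ parityPolytope t) {j : Fin n} (hj : j ∈ SuppZ t) :
    f j ≤ ∑ l ∈ SuppZ t \ {j}, f l := by
  have hineq := hf.2 {j} (singleton_subset_iff.2 hj) (by simp)
  rw [sum_singleton, sum_sub_distrib, sum_const, nsmul_one, sdiff_singleton_eq_erase,
    cast_card_erase_of_mem hj] at hineq
  rw [sdiff_singleton_eq_erase]
  linarith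

theorem stmt0 {n : ℕ} (t : Fin n → ZMod 2) (p : Fin n → ℝ)
    (h : ∃ j ∈ SuppZ t, p j > ∑ l ∈ SuppZ t \ {j}, p l) :
    p ∉ parityPolytope t := by
  obtain ⟨j, hj, hgt⟩ := h
  exact fun hp => (le_sum_sdiff_singleton_of_mem_parityPolytope hp hj).not_gt hgt
end

section
/- For a binary m×n parity check matrix H, the integral points of the fundamental polytope are exactly the codewords: P(H) ∩ {0,1}^n = C(H) (viewing codewords as 0-1 vectors in ℝ^n). -/
open Finset

/-! For a 0-1 vector `f` and `S ⊆ T = Supp(t)`, the left side of the inequality of `U(t)`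
indexed by `S` counts the positions of `T` on which `S` agrees with `F = {j ∈ T | f j = 1}`,
so the inequality fails exactly for `S = F`. Hence `f ∈ U(t)` iff `|F|` is even, which for
`f = embed x` is the parity check `∑ j, x j * t j = 0` over `𝔽₂`. -/

theorem sum_le_card_sub_one_iff {ι : Type*} (s : Finset ι) {g : ι → ℝ}
    (hg : ∀ j ∈ s, g j = 0 ∨ g j = 1) :
    ∑ j ∈ s, g j ≤ #s - 1 ↔ ∃ j ∈ s, g j ≠ 1 := by
  classical
  constructor
  · intro hle
    by_contra! hall
    rw [sum_congr rfl hall, sum_const, nsmul_one] at hle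
    linarith
  · rintro ⟨j, hj, hgj⟩
    have hg0 : g j = 0 := (hg j hj).resolve_right hgj
    have hrest : ∑ i ∈ s.erase j, g i ≤ #(s.erase j) := by
      simpa using sum_le_card_nsmul (s.erase j) g 1 fun i hi =>
        (hg i (mem_of_mem_erase hi)).elim (fun h => h.le.trans zero_le_one) le_of_eq
    rw [← add_sum_erase s g hj, hg0, zero_add]
    rwa [card_erase_of_mem hj, Nat.cast_sub (card_pos.2 ⟨j, hj⟩), Nat.cast_one] at hrest

theorem parity_sum_le_iff_ne {ι : Type*} [DecidableEq ι] {T S : Finset ι} (hS : S ⊆ T)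
    {f : ι → ℝ} (hf : ∀ j ∈ T, f j = 0 ∨ f j = 1) :
    ∑ j ∈ S, f j + ∑ j ∈ T \ S, (1 - f j) ≤ #T - 1 ↔ S ≠ T.filter (f · = 1) := by
  have hsplit : ∑ j ∈ S, f j + ∑ j ∈ T \ S, (1 - f j) =
      ∑ j ∈ T, if j ∈ S then f j else 1 - f j := by
    rw [sum_ite, filter_mem_eq_inter, inter_eq_right.2 hS, filter_notMem_eq_sdiff]
  have hterm : ∀ j ∈ T, ((if j ∈ S then f j else 1 - f j) ≠ 1 ↔ ¬(j ∈ S ↔ f j = 1)) := by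
    intro j hj
    rcases hf j hj with h | h <;> by_cases hjS : j ∈ S <;> simp [h, hjS]
  rw [hsplit, sum_le_card_sub_one_iff T fun j hj => by
    rcases hf j hj with h | h <;> split_ifs <;> simp [h]]
  have hchar : S = T.filter (f · = 1) ↔ ∀ j ∈ T, (j ∈ S ↔ f j = 1) := by
    refine ⟨fun h j hj => by simp [h, hj], fun h => ext fun j => ?_⟩
    by_cases hj : j ∈ T
    · simp [h j hj, hj]
    · simpa [hj] using mt (@hS j) hj
  simp only [Ne, hchar, not_forall, exists_prop]
  exact exists_congr fun j => and_congr_right (hterm j)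

theorem mem_parityPolytope_iff_even {n : ℕ} (t : Fin n → ZMod 2) {f : Fin n → ℝ}
    (hf : ∀ i, f i = 0 ∨ f i = 1) :
    f ∈ parityPolytope t ↔ Even #((SuppZ t).filter (f · = 1)) := by
  have hbox : ∀ i, f i ∈ Set.Icc (0 : ℝ) 1 := fun i => by rcases hf i with h | h <;> simp [h]
  simp only [parityPolytope, Set.mem_ofPred_eq, hbox, implies_true, true_and,
    ← Nat.not_odd_iff_even]
  constructor
  · intro h hodd
    exact (parity_sum_le_iff_ne (filter_subset _ _) fun j _ => hf j).1
      (h _ (filter_subset _ _) hodd) rfl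
  · intro hF S hS hodd
    exact (parity_sum_le_iff_ne hS fun j _ => hf j).2 fun h => hF (h ▸ hodd)

theorem embed_apply_eq_ite {n : ℕ} (x : Fin n → ZMod 2) (i : Fin n) :
    embed x i = if x i = 0 then 0 else 1 := by
  unfold embed
  generalize x i = a
  obtain rfl | rfl : a = 0 ∨ a = 1 := by revert a; decide
  all_goals simp [ZMod.val_one]

theorem embed_eq_zero_or_one {n : ℕ} (x : Fin n → ZMod 2) (i : Fin n) :
    embed x i = 0 ∨ embed x i = 1 := by
  rw [embed_apply_eq_ite]
  split_ifs <;> simp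

theorem embed_eq_one_iff {n : ℕ} {x : Fin n → ZMod 2} {i : Fin n} :
    embed x i = 1 ↔ x i ≠ 0 := by
  rw [embed_apply_eq_ite]
  split_ifs <;> simp [*]

theorem exists_embed_eq {n : ℕ} {f : Fin n → ℝ} (hf : ∀ i, f i = 0 ∨ f i = 1) :
    ∃ x, embed x = f :=
  ⟨fun i => if f i = 1 then 1 else 0, funext fun i => by
    rcases hf i with h | h <;> simp [embed_apply_eq_ite, h]⟩

theorem filter_embed_eq_one {n : ℕ} (t x : Fin n → ZMod 2) :
    (SuppZ t).filter (embed x · = 1) = SuppZ t ∩ SuppZ x := by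
  ext j
  simp [SuppZ, embed_eq_one_iff]

theorem sum_mul_eq_card_inter {n : ℕ} (t x : Fin n → ZMod 2) :
    ∑ j, x j * t j = (#(SuppZ t ∩ SuppZ x) : ZMod 2) := by
  have hmul : ∀ a b : ZMod 2, a * b = if b ≠ 0 ∧ a ≠ 0 then 1 else 0 := by decide
  simp only [hmul]
  rw [sum_boole]
  congr 2
  ext j
  simp [SuppZ]

theorem embed_mem_parityPolytope_iff {n : ℕ} (t x : Fin n → ZMod 2) :
    embed x ∈ parityPolytope t ↔ ∑ j, x j * t j = 0 := by
  rw [mem_parityPolytope_iff_even t (embed_eq_zero_or_one x), filter_embed_eq_one,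
    sum_mul_eq_card_inter, ZMod.natCast_eq_zero_iff_even]

theorem embed_mem_fundamentalPolytope_iff {m n : ℕ} (H : Fin m → Fin n → ZMod 2)
    (x : Fin n → ZMod 2) : embed x ∈ fundamentalPolytope H ↔ x ∈ code H := by
  simp only [fundamentalPolytope, Set.mem_iInter, embed_mem_parityPolytope_iff, code,
    Set.mem_ofPred_eq]

theorem stmt3 {m n : ℕ} (H : Fin m → Fin n → ZMod 2) :
    fundamentalPolytope H ∩ {f | ∀ i, f i = 0 ∨ f i = 1} = embed '' code H := by
  ext f
  constructor
  · rintro ⟨hP, hf⟩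
    obtain ⟨x, rfl⟩ := exists_embed_eq hf
    exact ⟨x, (embed_mem_fundamentalPolytope_iff H x).1 hP, rfl⟩
  · rintro ⟨x, hx, rfl⟩
    exact ⟨(embed_mem_fundamentalPolytope_iff H x).2 hx, embed_eq_zero_or_one x⟩
end

section
/- Let H be a binary m×n parity check matrix, p ∈ P(H), and h a redundant row of H such that U(h) is a cutting polytope of p (i.e., for j = argmax_{i∈Supp(h)} p_i, one has p_j > Σ_{l∈Supp(h)\{j}} p_l). Then C(H) ⊆ P(H) ∩ U(h) and p ∉ P(H) ∩ U(h). -/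
open Finset

/-!
For a `0`-`1` vector `f`, the left-hand side of the inequality of `U(t)` for an odd `S ⊆ Supp t`
is the number of `i ∈ Supp t` at which "`i ∈ S`" agrees with "`f i = 1`". A word orthogonal to `t`
has even weight on `Supp t`, so it disagrees with the odd set `S` somewhere and the inequality
holds. Codewords of `C(H)` are orthogonal to every `F₂`-combination of rows, hence lie in `P(H)`
and in `U(h)`. On the other hand, the inequality of `U(h)` for `S = {j}` is exactly the negation of
the cut condition.
-/

theorem Finset.sum_le_card_sub_one {ι R : Type*} [Ring R] [PartialOrder R] [IsOrderedAddMonoid R]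
    {s : Finset ι} {f : ι → R} (hle : ∀ i ∈ s, f i ≤ 1)
    {i : ι} (hi : i ∈ s) (hfi : f i ≤ 0) : ∑ j ∈ s, f j ≤ s.card - 1 := by
  classical
  have hrest : ∑ j ∈ s.erase i, f j ≤ (s.erase i).card • (1 : R) :=
    Finset.sum_le_card_nsmul _ _ _ fun j hj => hle j (Finset.mem_of_mem_erase hj)
  rw [Finset.card_erase_of_mem hi, nsmul_one, Nat.cast_pred (Finset.card_pos.2 ⟨i, hi⟩)] at hrest
  calc ∑ j ∈ s, f j = f i + ∑ j ∈ s.erase i, f j := (Finset.add_sum_erase s f hi).symm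
    _ ≤ 0 + ((s.card : R) - 1) := add_le_add hfi hrest
    _ = s.card - 1 := zero_add _

theorem Finset.sum_add_sum_sdiff_eq_sum_ite {ι M : Type*} [AddCommMonoid M] [DecidableEq ι]
    {s t : Finset ι} (hst : s ⊆ t) (f g : ι → M) :
    ∑ i ∈ s, f i + ∑ i ∈ t \ s, g i = ∑ i ∈ t, if i ∈ s then f i else g i := by
  rw [← Finset.sum_sdiff hst, add_comm]
  congr 1
  · exact Finset.sum_congr rfl fun i hi => (if_neg (Finset.mem_sdiff.1 hi).2).symm
  · exact Finset.sum_congr rfl fun i hi => (if_pos hi).symm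

theorem ZMod.two_eq_zero_or_eq_one (z : ZMod 2) : z = 0 ∨ z = 1 := by
  decide +revert

variable {m n : ℕ}

theorem embed_apply (x : Fin n → ZMod 2) (i : Fin n) :
    embed x i = if x i = 1 then 1 else 0 := by
  rcases ZMod.two_eq_zero_or_eq_one (x i) with hx | hx <;> simp [embed, hx, ZMod.val_one]

theorem mem_SuppZ_iff_eq_one {t : Fin n → ZMod 2} {i : Fin n} : i ∈ SuppZ t ↔ t i = 1 := by
  rcases ZMod.two_eq_zero_or_eq_one (t i) with ht | ht <;> simp [SuppZ, ht]

theorem exists_mem_SuppZ_not_iff {t x : Fin n → ZMod 2} (hx : ∑ j, x j * t j = 0)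
    {S : Finset (Fin n)} (hS : S ⊆ SuppZ t) (hodd : Odd S.card) :
    ∃ j ∈ SuppZ t, ¬(j ∈ S ↔ x j = 1) := by
  by_contra! hagree
  have hterm : ∀ j, x j * t j = if j ∈ S then 1 else 0 := by
    intro j
    by_cases hj : j ∈ SuppZ t
    · rw [mem_SuppZ_iff_eq_one.1 hj, mul_one]
      rcases ZMod.two_eq_zero_or_eq_one (x j) with hxj | hxj <;> simp [hagree j hj, hxj]
    · have htj : t j = 0 := by simpa [SuppZ] using hj
      simp [htj, show j ∉ S from fun hjS => hj (hS hjS)]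
  simp only [hterm, Finset.sum_boole, Finset.filter_mem_eq_inter, Finset.univ_inter] at hx
  exact zero_ne_one (hx.symm.trans (ZMod.natCast_eq_one_iff_odd.2 hodd))

theorem embed_mem_parityPolytope {t x : Fin n → ZMod 2} (hx : ∑ j, x j * t j = 0) :
    embed x ∈ parityPolytope t := by
  refine ⟨fun i => ?_, fun S hS hodd => ?_⟩
  · rw [embed_apply]
    split_ifs <;> norm_num
  obtain ⟨j, hj, hdisagree⟩ := exists_mem_SuppZ_not_iff hx hS hodd
  have hterm : ∀ i, (if i ∈ S then embed x i else 1 - embed x i) =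
      if (i ∈ S ↔ x i = 1) then 1 else 0 := by
    intro i
    by_cases hi : i ∈ S <;> by_cases hxi : x i = 1 <;> simp [embed_apply, hi, hxi]
  rw [Finset.sum_add_sum_sdiff_eq_sum_ite hS]
  refine Finset.sum_le_card_sub_one (fun i _ => ?_) hj ?_ <;> rw [hterm]
  · split_ifs <;> norm_num
  · rw [if_neg hdisagree]

theorem sum_mul_linearCombination_eq_zero {H : Fin m → Fin n → ZMod 2} {x : Fin n → ZMod 2}
    (hx : x ∈ code H) (a : Fin m → ZMod 2) : ∑ j, x j * ∑ i, a i * H i j = 0 :=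
  calc ∑ j, x j * ∑ i, a i * H i j = ∑ i, a i * ∑ j, x j * H i j := by
        simp_rw [Finset.mul_sum]
        rw [Finset.sum_comm]
        exact Finset.sum_congr rfl fun i _ => Finset.sum_congr rfl fun j _ => by ring
    _ = 0 := by simp [hx _]

theorem notMem_parityPolytope_of_cut {t : Fin n → ZMod 2} {p : Fin n → ℝ} {j : Fin n}
    (hj : j ∈ SuppZ t) (hcut : p j > ∑ l ∈ SuppZ t \ {j}, p l) : p ∉ parityPolytope t := by
  intro hp
  have hjS : {j} ⊆ SuppZ t := Finset.singleton_subset_iff.2 hj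
  have hineq := hp.2 {j} hjS (by simp)
  rw [Finset.sum_singleton, Finset.sum_sub_distrib, Finset.sum_const, nsmul_one,
    Finset.card_sdiff_of_subset hjS, Finset.card_singleton,
    Nat.cast_pred (Finset.card_pos.2 ⟨j, hj⟩)] at hineq
  linarith

theorem stmt5_general {m n : ℕ} (H : Fin m → Fin n → ZMod 2) (a : Fin m → ZMod 2)
    (h : Fin n → ZMod 2) (hh : h = fun j => ∑ i, a i * H i j)
    (p : Fin n → ℝ)
    (j : Fin n) (hj : j ∈ SuppZ h)
    (hcut : p j > ∑ l ∈ SuppZ h \ {j}, p l) :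
    embed '' code H ⊆ fundamentalPolytope H ∩ parityPolytope h ∧
    p ∉ fundamentalPolytope H ∩ parityPolytope h := by
  refine ⟨?_, fun hmem => notMem_parityPolytope_of_cut hj hcut hmem.2⟩
  rintro _ ⟨x, hx, rfl⟩
  refine ⟨Set.mem_iInter.2 fun i => embed_mem_parityPolytope (hx i), ?_⟩
  subst hh
  exact embed_mem_parityPolytope (sum_mul_linearCombination_eq_zero hx a)

theorem stmt5 {m n : ℕ} (H : Fin m → Fin n → ZMod 2) (a : Fin m → ZMod 2)
    (h : Fin n → ZMod 2) (hh : h = fun j => ∑ i, a i * H i j)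
    (p : Fin n → ℝ) (hp : p ∈ fundamentalPolytope H)
    (j : Fin n) (hj : j ∈ SuppZ h) (hmax : ∀ i ∈ SuppZ h, p i ≤ p j)
    (hcut : p j > ∑ l ∈ SuppZ h \ {j}, p l) :
    embed '' code H ⊆ fundamentalPolytope H ∩ parityPolytope h ∧
    p ∉ fundamentalPolytope H ∩ parityPolytope h :=
  stmt5_general H a h hh p j hj hcut
end

section
/- Let H be a binary m×n parity check matrix. Then the relaxed fractional distance equals the fractional distance: min over inactive constraints k of (min Σ_i f_i subject to f ∈ K(H) ∩ F_k) equals d_frac(H) = min over nonzero vertices f of P(H) of Σ_i f_i. (Assume P(H) has at least one nonzero vertex.) -/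
/-!
Every nonzero vertex of `P(H)` lies on the hyperplane of an inactive constraint: otherwise all
inactive constraints have slack at `f`, the active ones are homogeneous, and so `(1 ± δ) f ∈ P(H)`
for small `δ`, contradicting that `f` is a vertex. Conversely, take `f ∈ K(H)` on an inactive
hyperplane and scale it by the largest `ε ≤ 1` with `ε f ∈ P(H)`; then `ε f` lies on an inactive
hyperplane, whose intersection with `P(H)` is an exposed face avoiding the origin. The minimum of
`∑ f_i` over that face is attained at an extreme point of `P(H)`, a nonzero vertex of weight at
most `∑ ε f_i ≤ ∑ f_i`.
-/

open Finset

/-- Fundamental cone K(H): box constraints together with the active parity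
constraints (those whose defining hyperplane passes through the origin). -/
def fundamentalCone {m n : ℕ} (H : Fin m → Fin n → ZMod 2) : Set (Fin n → ℝ) :=
  {f | (∀ i, f i ∈ Set.Icc (0:ℝ) 1) ∧
    ∀ i, ∀ S ⊆ SuppZ (H i), Odd S.card →
      (((SuppZ (H i) \ S).card : ℝ) = ((SuppZ (H i)).card : ℝ) - 1) →
      ∑ j ∈ S, f j + ∑ j ∈ SuppZ (H i) \ S, (1 - f j) ≤ ((SuppZ (H i)).card : ℝ) - 1}

section Convex

variable {E : Type*} [AddCommGroup E] [Module ℝ E] [TopologicalSpace E] [T2Space E]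
  [IsTopologicalAddGroup E] [ContinuousSMul ℝ E] [LocallyConvexSpace ℝ E]

/-- The face of `A` on which `ℓ` is maximal is exposed, and so is the face of that face on which
`φ` is minimal; Krein–Milman gives an extreme point of the latter, which is extreme in `A`. -/
theorem IsCompact.exists_mem_extremePoints_of_isMaxOn {A : Set E} (hA : IsCompact A)
    {ℓ : StrongDual ℝ E} {g : E} (hg : g ∈ A) (hmax : IsMaxOn ℓ A g) (φ : StrongDual ℝ E) :
    ∃ x ∈ A.extremePoints ℝ, ℓ x = ℓ g ∧ φ x ≤ φ g := by
  have hF : IsExposed ℝ A (ℓ.toExposed A) := ContinuousLinearMap.toExposed.isExposed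
  have hgF : g ∈ ℓ.toExposed A := ⟨hg, isMaxOn_iff.mp hmax⟩
  have hG : IsExposed ℝ (ℓ.toExposed A) ((-φ).toExposed (ℓ.toExposed A)) :=
    ContinuousLinearMap.toExposed.isExposed
  obtain ⟨z, hzF, hz⟩ :=
    (hF.isCompact hA).exists_isMaxOn ⟨g, hgF⟩ (-φ).continuous.continuousOn
  obtain ⟨x, hx⟩ :=
    (hG.isCompact (hF.isCompact hA)).extremePoints_nonempty ⟨z, hzF, isMaxOn_iff.mp hz⟩
  obtain ⟨⟨hxA, hxmax⟩, hxmin⟩ := hx.1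
  refine ⟨x, (hF.isExtreme.trans hG.isExtreme).extremePoints_subset_extremePoints hx,
    le_antisymm (isMaxOn_iff.mp hmax x hxA) (hxmax g hg), ?_⟩
  simpa using hxmin g hgF

end Convex

section Vertex

variable {n : ℕ} {X : Set (Fin n → ℝ)} {f : Fin n → ℝ}

theorem isVertex_of_mem_extremePoints (hf : f ∈ X.extremePoints ℝ) : IsVertex X f := by
  refine ⟨hf.1, fun g h hg hh t ht₀ ht₁ hfgh => ?_⟩
  have hseg : f ∈ openSegment ℝ g h :=
    ⟨t, 1 - t, ht₀, by linarith, by ring, by rw [hfgh]; funext j; simp⟩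
  rw [hf.2 hg hh hseg, hf.2 hh hg (openSegment_symm ℝ g h ▸ hseg)]

theorem IsVertex.eq_zero_of_smul_mem (hf : IsVertex X f) {δ : ℝ} (hδ : δ ≠ 0)
    (hadd : (1 + δ) • f ∈ X) (hsub : (1 - δ) • f ∈ X) : f = 0 := by
  have h := hf.2 _ _ hadd hsub (1 / 2) (by norm_num) (by norm_num) (by funext j; simp; ring)
  have h2δ : (2 * δ) • f = 0 := by
    rw [show 2 * δ = (1 + δ) - (1 - δ) by ring, sub_smul, h, sub_self]
  exact (smul_eq_zero.mp h2δ).resolve_left (mul_ne_zero two_ne_zero hδ)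

end Vertex

section FundamentalPolytope

variable {m n : ℕ} {H : Fin m → Fin n → ZMod 2}

/-- The linear part of the left-hand side of the parity constraint indexed by `S ⊆ D`. -/
def parityFunctional (D S : Finset (Fin n)) : StrongDual ℝ (Fin n → ℝ) :=
  ∑ j ∈ S, ContinuousLinearMap.proj j - ∑ j ∈ D \ S, ContinuousLinearMap.proj j

theorem sum_add_sum_one_sub_eq (D S : Finset (Fin n)) (x : Fin n → ℝ) :
    ∑ j ∈ S, x j + ∑ j ∈ D \ S, (1 - x j) = parityFunctional D S x + (D \ S).card := by
  simp [parityFunctional, sum_sub_distrib]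
  ring

theorem card_sdiff_le_card_sub_one {D S : Finset (Fin n)} (hS : S ⊆ D) (hodd : Odd S.card) :
    ((D \ S).card : ℝ) ≤ D.card - 1 := by
  have h := card_sdiff_add_card_eq_card hS
  have hpos : 1 ≤ S.card := hodd.pos
  rw [le_sub_iff_add_le, ← Nat.cast_one, ← Nat.cast_add, Nat.cast_le]
  omega

theorem isClosed_fundamentalPolytope : IsClosed (fundamentalPolytope H) := by
  refine isClosed_iInter fun i => ?_
  simp only [parityPolytope, Set.ofPred_and, Set.ofPred_forall]
  exact (isClosed_iInter fun j => isClosed_Icc.preimage (continuous_apply j)).inter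
    (isClosed_iInter fun S => isClosed_iInter fun _ => isClosed_iInter fun _ =>
      isClosed_le (by fun_prop) continuous_const)

theorem mem_Icc_of_mem_fundamentalPolytope (hm : 0 < m) {f : Fin n → ℝ}
    (hf : f ∈ fundamentalPolytope H) (j : Fin n) : f j ∈ Set.Icc (0 : ℝ) 1 :=
  (Set.mem_iInter.mp hf ⟨0, hm⟩).1 j

theorem isCompact_fundamentalPolytope (hm : 0 < m) : IsCompact (fundamentalPolytope H) :=
  (isCompact_univ_pi fun _ => isCompact_Icc).of_isClosed_subset isClosed_fundamentalPolytope
    fun _ hf => Set.mem_univ_pi.mpr (mem_Icc_of_mem_fundamentalPolytope hm hf)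

theorem fundamentalPolytope_subset_fundamentalCone (hm : 0 < m) :
    fundamentalPolytope H ⊆ fundamentalCone H := fun _ hf =>
  ⟨mem_Icc_of_mem_fundamentalPolytope hm hf,
    fun i S hS hodd _ => (Set.mem_iInter.mp hf i).2 S hS hodd⟩

theorem pos_of_isVertex_fundamentalPolytope {f : Fin n → ℝ}
    (hv : IsVertex (fundamentalPolytope H) f) (hf : f ≠ 0) : 0 < m := by
  refine Nat.pos_of_ne_zero fun hm => hf (hv.eq_zero_of_smul_mem one_ne_zero ?_ ?_) <;>
  · subst hm
    simp [fundamentalPolytope]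

variable (H) in
/-- The inactive constraints of `P(H)` are the parity constraints whose hyperplane misses the
origin and the upper box constraints `f j ≤ 1`; here they all hold strictly. -/
def inactiveSlack : Set (Fin n → ℝ) :=
  {f | (∀ j, f j < 1) ∧ ∀ i, ∀ S ⊆ SuppZ (H i), Odd S.card →
    ((SuppZ (H i) \ S).card : ℝ) ≠ (SuppZ (H i)).card - 1 →
    ∑ j ∈ S, f j + ∑ j ∈ SuppZ (H i) \ S, (1 - f j) < (SuppZ (H i)).card - 1}

variable (H) in
def OnInactiveFacet (f : Fin n → ℝ) : Prop :=
  (∃ i, ∃ S ⊆ SuppZ (H i), Odd S.card ∧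
      (((SuppZ (H i) \ S).card : ℝ) ≠ ((SuppZ (H i)).card : ℝ) - 1) ∧
      ∑ j ∈ S, f j + ∑ j ∈ SuppZ (H i) \ S, (1 - f j) = ((SuppZ (H i)).card : ℝ) - 1) ∨
    (∃ j, f j = 1)

theorem isOpen_inactiveSlack : IsOpen (inactiveSlack H) := by
  simp only [inactiveSlack, Set.ofPred_and, Set.ofPred_forall]
  exact (isOpen_iInter_of_finite fun j => isOpen_lt (continuous_apply j) continuous_const).inter
    (isOpen_iInter_of_finite fun i => isOpen_iInter_of_finite fun S =>
      isOpen_iInter_of_finite fun _ => isOpen_iInter_of_finite fun _ =>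
        isOpen_iInter_of_finite fun _ => isOpen_lt (by fun_prop) continuous_const)

theorem zero_mem_inactiveSlack : (0 : Fin n → ℝ) ∈ inactiveSlack H := by
  refine ⟨fun _ => zero_lt_one, fun i S hS hodd hinact => ?_⟩
  simpa using (card_sdiff_le_card_sub_one hS hodd).lt_of_ne hinact

theorem mem_inactiveSlack_of_not_onInactiveFacet (hm : 0 < m) {f : Fin n → ℝ}
    (hf : f ∈ fundamentalPolytope H) (hfac : ¬ OnInactiveFacet H f) : f ∈ inactiveSlack H := by
  simp only [OnInactiveFacet, not_or, not_exists, not_and] at hfac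
  exact ⟨fun j => (mem_Icc_of_mem_fundamentalPolytope hm hf j).2.lt_of_ne (hfac.2 j),
    fun i S hS hodd hinact =>
      ((Set.mem_iInter.mp hf i).2 S hS hodd).lt_of_ne (hfac.1 i S hS hodd hinact)⟩

/-- Active constraints are homogeneous, so near the origin the cone and the polytope agree. -/
theorem smul_mem_fundamentalPolytope {f : Fin n → ℝ} (hf : f ∈ fundamentalCone H) {c : ℝ}
    (hc : 0 ≤ c) (hslack : c • f ∈ inactiveSlack H) : c • f ∈ fundamentalPolytope H := by
  refine Set.mem_iInter.mpr fun i =>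
    ⟨fun j => ⟨mul_nonneg hc (hf.1 j).1, (hslack.1 j).le⟩, fun S hS hodd => ?_⟩
  by_cases hact : ((SuppZ (H i) \ S).card : ℝ) = (SuppZ (H i)).card - 1
  · have hfS := hf.2 i S hS hodd hact
    rw [sum_add_sum_one_sub_eq, hact] at hfS ⊢
    rw [map_smul, smul_eq_mul]
    nlinarith
  · exact (hslack.2 i S hS hodd hact).le

theorem eventually_smul_mem_inactiveSlack {f : Fin n → ℝ} {c : ℝ}
    (hc : c • f ∈ inactiveSlack H) : ∀ᶠ d in nhds c, d • f ∈ inactiveSlack H :=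
  (isOpen_inactiveSlack.preimage
    (continuous_id.smul continuous_const : Continuous fun d : ℝ => d • f)).mem_nhds hc

theorem onInactiveFacet_of_isVertex (hm : 0 < m) {f : Fin n → ℝ}
    (hv : IsVertex (fundamentalPolytope H) f) (hf : f ≠ 0) : OnInactiveFacet H f := by
  by_contra hfac
  have hK := fundamentalPolytope_subset_fundamentalCone hm hv.1
  obtain ⟨ε, hε, hball⟩ := Metric.eventually_nhds_iff.mp (eventually_smul_mem_inactiveSlack
    (c := 1) (by simpa using mem_inactiveSlack_of_not_onInactiveFacet hm hv.1 hfac))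
  set δ := min (ε / 2) 1
  have hδ : 0 < δ := lt_min (half_pos hε) one_pos
  have hmem : ∀ c, |c - 1| ≤ δ → c • f ∈ fundamentalPolytope H := fun c hc =>
    smul_mem_fundamentalPolytope hK (by linarith [(abs_le.mp hc).1, min_le_right (ε / 2) 1])
      (hball (by rw [Real.dist_eq]; linarith [min_le_left (ε / 2) 1]))
  exact hf (hv.eq_zero_of_smul_mem hδ.ne' (hmem _ (by simp [abs_of_pos hδ]))
    (hmem _ (by simp [abs_of_pos hδ])))

theorem exists_mem_onInactiveFacet_sum_le (hm : 0 < m) {f : Fin n → ℝ}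
    (hf : f ∈ fundamentalCone H) (hfac : OnInactiveFacet H f) :
    ∃ g ∈ fundamentalPolytope H, OnInactiveFacet H g ∧ ∑ j, g j ≤ ∑ j, f j := by
  have hA : IsCompact (Set.Icc (0 : ℝ) 1 ∩ (fun c : ℝ => c • f) ⁻¹' fundamentalPolytope H) :=
    isCompact_Icc.inter_right (isClosed_fundamentalPolytope.preimage (by fun_prop))
  obtain ⟨ε, ⟨⟨hε₀, hε₁⟩, hεP⟩, hεmax⟩ := hA.exists_isGreatest ⟨0, Set.left_mem_Icc.mpr zero_le_one,
    smul_mem_fundamentalPolytope hf le_rfl (by simpa using zero_mem_inactiveSlack)⟩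
  refine ⟨ε • f, hεP, ?_, ?_⟩
  · by_contra hεfac
    rcases hε₁.eq_or_lt with rfl | hlt
    · exact hεfac (by simpa using hfac)
    obtain ⟨c, hcslack, hεc, hc₁⟩ :=
      (((eventually_smul_mem_inactiveSlack
        (mem_inactiveSlack_of_not_onInactiveFacet hm hεP hεfac)).filter_mono
        nhdsWithin_le_nhds).and (Ioo_mem_nhdsGT hlt)).exists
    exact hεc.not_ge (hεmax ⟨⟨by linarith, hc₁.le⟩,
      smul_mem_fundamentalPolytope hf (by linarith) hcslack⟩)
  · simp only [Pi.smul_apply, smul_eq_mul, ← mul_sum]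
    exact mul_le_of_le_one_left (sum_nonneg fun j _ => (hf.1 j).1) hε₁

theorem exists_isVertex_sum_le_of_isMaxOn (hm : 0 < m) {g : Fin n → ℝ}
    (hg : g ∈ fundamentalPolytope H) {ℓ : StrongDual ℝ (Fin n → ℝ)}
    (hmax : IsMaxOn ℓ (fundamentalPolytope H) g) (hℓ : ℓ g ≠ 0) :
    ∃ x, IsVertex (fundamentalPolytope H) x ∧ x ≠ 0 ∧ ∑ j, x j ≤ ∑ j, g j := by
  obtain ⟨x, hx, hℓx, hle⟩ := (isCompact_fundamentalPolytope hm).exists_mem_extremePoints_of_isMaxOn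
    hg hmax (∑ j, ContinuousLinearMap.proj j)
  refine ⟨x, isVertex_of_mem_extremePoints hx, ?_, by simpa using hle⟩
  rintro rfl
  exact hℓ (by rw [← hℓx, map_zero])

theorem exists_isVertex_sum_le_of_onInactiveFacet (hm : 0 < m) {g : Fin n → ℝ}
    (hg : g ∈ fundamentalPolytope H) (hfac : OnInactiveFacet H g) :
    ∃ x, IsVertex (fundamentalPolytope H) x ∧ x ≠ 0 ∧ ∑ j, x j ≤ ∑ j, g j := by
  rcases hfac with ⟨i, S, hS, hodd, hinact, htight⟩ | ⟨j, hj⟩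
  · rw [sum_add_sum_one_sub_eq] at htight
    refine exists_isVertex_sum_le_of_isMaxOn hm hg (ℓ := parityFunctional (SuppZ (H i)) S)
      (isMaxOn_iff.mpr fun y hy => ?_) fun h => hinact (by linarith)
    have hyS := (Set.mem_iInter.mp hy i).2 S hS hodd
    rw [sum_add_sum_one_sub_eq] at hyS
    linarith
  · exact exists_isVertex_sum_le_of_isMaxOn hm hg (ℓ := ContinuousLinearMap.proj j)
      (isMaxOn_iff.mpr fun y hy => by
        simpa [hj] using (mem_Icc_of_mem_fundamentalPolytope hm hy j).2)
      (by simp [hj])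

end FundamentalPolytope

theorem stmt9 {m n : ℕ} (H : Fin m → Fin n → ZMod 2)
    (hex : ∃ f, IsVertex (fundamentalPolytope H) f ∧ f ≠ 0) :
    sInf {w : ℝ | ∃ f, f ∈ fundamentalCone H ∧ w = ∑ j, f j ∧
        ((∃ i, ∃ S ⊆ SuppZ (H i), Odd S.card ∧
            (((SuppZ (H i) \ S).card : ℝ) ≠ ((SuppZ (H i)).card : ℝ) - 1) ∧
            ∑ j ∈ S, f j + ∑ j ∈ SuppZ (H i) \ S, (1 - f j) = ((SuppZ (H i)).card : ℝ) - 1) ∨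
          (∃ j, f j = 1))} =
    sInf {w : ℝ | ∃ f, IsVertex (fundamentalPolytope H) f ∧ f ≠ 0 ∧ w = ∑ i, f i} := by
  obtain ⟨f₀, hv₀, hf₀⟩ := hex
  have hm := pos_of_isVertex_fundamentalPolytope hv₀ hf₀
  refine csInf_eq_csInf_of_forall_exists_le ?_ ?_
  · rintro _ ⟨f, hf, rfl, hfac⟩
    obtain ⟨g, hg, hgfac, hgf⟩ := exists_mem_onInactiveFacet_sum_le hm hf hfac
    obtain ⟨x, hx, hx0, hxg⟩ := exists_isVertex_sum_le_of_onInactiveFacet hm hg hgfac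
    exact ⟨_, ⟨x, hx, hx0, rfl⟩, hxg.trans hgf⟩
  · rintro _ ⟨f, hv, hf, rfl⟩
    exact ⟨_, ⟨f, fundamentalPolytope_subset_fundamentalCone hm hv.1, rfl,
      onInactiveFacet_of_isVertex hm hv hf⟩, le_rfl⟩
end

section
/- Let H be a binary m×n parity check matrix, p ∈ ℝ^n with nonnegative entries, and h* = Σ_i a*_i h_i a redundant row such that U(h*) is a cutting polytope of p (there exists j ∈ Supp(h*) with p_j > Σ_{l∈Supp(h*)\{j}} p_l). Define Q = {i ∈ {1,…,m} : ∃ j ∈ Supp(p), h_{ij} ≠ 0} and let h = Σ_{i∈Q} a*_i h_i. Then U(h) is also a cutting polytope of p, i.e., there exists j ∈ Supp(h) with p_j > Σ_{l∈Supp(h)\{j}} p_l. -/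
open Finset

/-!
Rows outside `Q` vanish on `Supp(p)`, so `h` and `h*` agree there. The cutting condition only
sees coordinates where `p ≠ 0`: its witness `j` has `p j > 0`, and coordinates with `p l = 0`
contribute nothing to the sum.
-/

def IsCutting {n : ℕ} (p : Fin n → ℝ) (t : Fin n → ZMod 2) : Prop :=
  ∃ j ∈ SuppZ t, p j > ∑ l ∈ SuppZ t \ {j}, p l

section

variable {n : ℕ} {p : Fin n → ℝ} {t t' : Fin n → ZMod 2}

theorem mem_suppZ_iff_of_eqOn (h : ∀ l, p l ≠ 0 → t l = t' l) {l : Fin n} (hl : p l ≠ 0) :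
    l ∈ SuppZ t ↔ l ∈ SuppZ t' := by
  simp only [SuppZ, mem_filter, mem_univ, true_and, h l hl]

theorem sum_sdiff_suppZ_eq_of_eqOn (h : ∀ l, p l ≠ 0 → t l = t' l) (s : Finset (Fin n)) :
    ∑ l ∈ SuppZ t \ s, p l = ∑ l ∈ SuppZ t' \ s, p l := by
  have hmem : ∀ l, p l ≠ 0 → (l ∈ SuppZ t \ s ↔ l ∈ SuppZ t' \ s) := fun l hl => by
    simp only [mem_sdiff, mem_suppZ_iff_of_eqOn h hl]
  refine sum_congr_of_eq_on_inter (fun l h₁ h₂ => ?_) (fun l h₂ h₁ => ?_) (fun _ _ _ => rfl)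
  · by_contra hl
    exact h₂ ((hmem l hl).1 h₁)
  · by_contra hl
    exact h₁ ((hmem l hl).2 h₂)

theorem IsCutting.of_eqOn (hp : ∀ i, 0 ≤ p i) (h : ∀ l, p l ≠ 0 → t l = t' l)
    (hcut : IsCutting p t) : IsCutting p t' := by
  obtain ⟨j, hj, hgt⟩ := hcut
  have hpj : p j ≠ 0 := (lt_of_le_of_lt (sum_nonneg fun l _ => hp l) hgt).ne'
  refine ⟨j, (mem_suppZ_iff_of_eqOn h hpj).1 hj, ?_⟩
  rwa [← sum_sdiff_suppZ_eq_of_eqOn h]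

end

theorem sum_rows_touching_supp_eq {m n : ℕ} (H : Fin m → Fin n → ZMod 2) (a : Fin m → ZMod 2)
    {p : Fin n → ℝ} {l : Fin n} (hl : p l ≠ 0) :
    ∑ i ∈ univ.filter (fun i => ∃ j ∈ SuppR p, H i j ≠ 0), a i * H i l = ∑ i, a i * H i l := by
  refine sum_subset (subset_univ _) fun i _ hi => ?_
  have hHi : H i l = 0 := by
    by_contra hne
    exact hi (mem_filter.2 ⟨mem_univ i, l, by simpa [SuppR] using hl, hne⟩)
  rw [hHi, mul_zero]

theorem stmt10 {m n : ℕ} (H : Fin m → Fin n → ZMod 2) (a : Fin m → ZMod 2)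
    (p : Fin n → ℝ) (hp : ∀ i, 0 ≤ p i)
    (hstar hrow : Fin n → ZMod 2)
    (Q : Finset (Fin m))
    (hQ : Q = Finset.univ.filter (fun i => ∃ j ∈ SuppR p, H i j ≠ 0))
    (hhstar : hstar = fun j => ∑ i, a i * H i j)
    (hhrow : hrow = fun j => ∑ i ∈ Q, a i * H i j)
    (hcut : ∃ j ∈ SuppZ hstar, p j > ∑ l ∈ SuppZ hstar \ {j}, p l) :
    ∃ j ∈ SuppZ hrow, p j > ∑ l ∈ SuppZ hrow \ {j}, p l := by
  subst hQ hhstar hhrow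
  exact IsCutting.of_eqOn hp (fun l hl => (sum_rows_touching_supp_eq H a hl).symm) hcut
end

section
/- For a binary vector t ∈ F_2^n with |Supp(t)| ≥ 1, the single parity polytope U(t) equals the set of f ∈ [0,1]^n whose restriction to Supp(t) lies in the convex hull of the even-weight binary vectors on Supp(t) (coordinates outside Supp(t) are unconstrained within [0,1]). -/
open Finset

/-!
The odd-set inequalities say that `f` lies at `ℓ¹`-distance at least `1` from every odd-weight
vertex of the cube, so every even-weight vertex satisfies them, and so does their convex hull.

Conversely, fix `x` in the polytope and a linear functional `c`, and let `T = {i | 0 < c i}` be the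
vertex maximising `c` over the cube. Whenever `δ ≤ |c i|` for all `i`, we have
`c ⬝ x + δ * dist(x, T) ≤ c(T)`. If `T` is even this bounds `c ⬝ x` by the value of `c` at an even
vertex. If `T` is odd, take `δ = min |c i|` and flip the coordinate attaining it: this gives an
even vertex of value `c(T) - δ`, which is at least `c ⬝ x` because `dist(x, T) ≥ 1`. As no linear
functional separates `x` from the even vertices, `x` lies in their convex hull.
-/

theorem mem_convexHull_of_forall_exists_le {ι : Type*} [Fintype ι] {V : Set (ι → ℝ)}
    (hV : V.Finite) {x : ι → ℝ} (h : ∀ c : ι → ℝ, ∃ v ∈ V, ∑ i, x i * c i ≤ ∑ i, v i * c i) :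
    x ∈ convexHull ℝ V := by
  classical
  by_contra hx
  obtain ⟨f, u, hfV, hfx⟩ :=
    geometric_hahn_banach_closed_point (convex_convexHull ℝ V) (hV.isClosed_convexHull (𝕜 := ℝ)) hx
  have hf (y : ι → ℝ) : f y = ∑ i, y i * f fun j => if i = j then 1 else 0 :=
    f.toLinearMap.pi_apply_eq_sum_univ y
  obtain ⟨v, hv, hle⟩ := h fun i => f fun j => if i = j then 1 else 0
  have hfv := hfV v (subset_convexHull ℝ V hv)
  rw [hf] at hfv hfx
  linarith

section ParityCube

variable {ι : Type*} [Fintype ι] [DecidableEq ι]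

/-- On the unit cube, the `ℓ¹`-distance from `x` to the indicator vector of `S`. -/
def cubeDist (x : ι → ℝ) (S : Finset ι) : ℝ :=
  ∑ j ∈ S, (1 - x j) + ∑ j ∈ Sᶜ, x j

variable (ι) in
def parityCube : Set (ι → ℝ) :=
  {x | (∀ i, x i ∈ Set.Icc (0 : ℝ) 1) ∧ ∀ S : Finset ι, Odd S.card → 1 ≤ cubeDist x S}

variable (ι) in
def evenVertices : Set (ι → ℝ) :=
  {g | ∃ S : Finset ι, Even S.card ∧ g = fun i => if i ∈ S then 1 else 0}

lemma cubeDist_indicator (S T : Finset ι) :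
    cubeDist (fun i => if i ∈ T then 1 else 0) S = (S \ T).card + (T \ S).card := by
  simp only [cubeDist, apply_ite, sub_zero, sub_self, Finset.sum_ite, Finset.sum_const_zero,
    Finset.sum_const, nsmul_eq_mul, mul_one, zero_add, add_zero]
  congr 3 <;> ext <;> simp [and_comm]

lemma one_le_cubeDist_indicator {S T : Finset ι} (hST : S ≠ T) :
    1 ≤ cubeDist (fun i => if i ∈ T then 1 else 0) S := by
  have : 1 ≤ (S \ T).card + (T \ S).card := by
    by_contra! h
    simp only [Nat.lt_one_iff, Nat.add_eq_zero_iff, Finset.card_eq_zero,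
      Finset.sdiff_eq_empty_iff_subset] at h
    exact hST (h.1.antisymm h.2)
  rw [cubeDist_indicator]
  exact_mod_cast this

lemma evenVertices_subset_parityCube : evenVertices ι ⊆ parityCube ι := by
  rintro _ ⟨T, hT, rfl⟩
  refine ⟨fun i => by by_cases i ∈ T <;> simp [*], fun S hS => one_le_cubeDist_indicator ?_⟩
  rintro rfl
  exact Nat.not_even_iff_odd.2 hS hT

lemma cubeDist_add {x y : ι → ℝ} {a b : ℝ} (hab : a + b = 1) (S : Finset ι) :
    cubeDist (a • x + b • y) S = a * cubeDist x S + b * cubeDist y S := by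
  have h (j : ι) : 1 - (a • x + b • y) j = a * (1 - x j) + b * (1 - y j) := by
    simp only [Pi.add_apply, Pi.smul_apply, smul_eq_mul]
    linear_combination -hab
  simp only [cubeDist, h]
  simp only [Pi.add_apply, Pi.smul_apply, smul_eq_mul, Finset.sum_add_distrib,
    ← Finset.mul_sum]
  ring

lemma convex_parityCube : Convex ℝ (parityCube ι) := by
  intro x hx y hy a b ha hb hab
  refine ⟨fun i => convex_Icc (0 : ℝ) 1 (hx.1 i) (hy.1 i) ha hb hab, fun S hS => ?_⟩
  rw [cubeDist_add hab]
  linarith [mul_le_mul_of_nonneg_left (hx.2 S hS) ha, mul_le_mul_of_nonneg_left (hy.2 S hS) hb]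

lemma sum_mul_add_mul_cubeDist_le {x : ι → ℝ} (hx : ∀ i, x i ∈ Set.Icc (0 : ℝ) 1) {c : ι → ℝ}
    {δ : ℝ} (hδ : ∀ i, δ ≤ |c i|) :
    ∑ i, x i * c i + δ * cubeDist x {i | 0 < c i} ≤ ∑ i ∈ {i | 0 < c i}, c i := by
  set T : Finset ι := {i | 0 < c i}
  have hT : ∀ i ∈ T, x i * c i + δ * (1 - x i) ≤ c i := by
    intro i hi
    have hc : 0 < c i := (Finset.mem_filter.1 hi).2
    nlinarith [(hx i).2, hδ i, abs_of_pos hc]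
  have hTc : ∀ i ∈ Tᶜ, x i * c i + δ * x i ≤ 0 := by
    intro i hi
    have hc : c i ≤ 0 := by simpa [T] using hi
    nlinarith [(hx i).1, hδ i, abs_of_nonpos hc]
  have hsumT := Finset.sum_le_sum hT
  have hsumTc := Finset.sum_le_sum hTc
  rw [cubeDist, mul_add, Finset.mul_sum, Finset.mul_sum,
    ← Finset.sum_add_sum_compl T fun i => x i * c i]
  simp only [Finset.sum_add_distrib, Finset.sum_const_zero] at hsumT hsumTc
  linarith

lemma exists_even_sum_eq_sub_abs {c : ι → ℝ} (hodd : Odd (Finset.card {i | 0 < c i})) (i : ι) :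
    ∃ W : Finset ι, Even W.card ∧ ∑ j ∈ W, c j = ∑ j ∈ {i | 0 < c i}, c j - |c i| := by
  set T : Finset ι := {i | 0 < c i}
  by_cases hi : i ∈ T
  · have hc : 0 < c i := (Finset.mem_filter.1 hi).2
    refine ⟨T.erase i, ?_, by rw [Finset.sum_erase_eq_sub hi, abs_of_pos hc]⟩
    rw [Finset.card_erase_of_mem hi]
    exact Nat.Odd.sub_odd hodd odd_one
  · have hc : c i ≤ 0 := by simpa [T] using hi
    refine ⟨insert i T, ?_, by rw [Finset.sum_insert hi, abs_of_nonpos hc]; ring⟩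
    rw [Finset.card_insert_of_notMem hi]
    exact hodd.add_one

lemma exists_mem_evenVertices_sum_mul_le {x : ι → ℝ} (hx : x ∈ parityCube ι) (c : ι → ℝ) :
    ∃ v ∈ evenVertices ι, ∑ i, x i * c i ≤ ∑ i, v i * c i := by
  suffices ∃ W : Finset ι, Even W.card ∧ ∑ i, x i * c i ≤ ∑ j ∈ W, c j by
    obtain ⟨W, hW, hle⟩ := this
    exact ⟨_, ⟨W, hW, rfl⟩, by simpa [ite_mul, Finset.sum_ite_mem] using hle⟩
  set T : Finset ι := {i | 0 < c i}
  rcases Nat.even_or_odd T.card with heven | hodd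
  · refine ⟨T, heven, ?_⟩
    simpa using sum_mul_add_mul_cubeDist_le hx.1 (δ := 0) fun i => abs_nonneg (c i)
  · obtain ⟨i, -, hi⟩ := Finset.exists_min_image Finset.univ (fun i => |c i|)
      ((Finset.card_pos.1 hodd.pos).mono (Finset.subset_univ T))
    obtain ⟨W, hW, hWsum⟩ := exists_even_sum_eq_sub_abs hodd i
    refine ⟨W, hW, ?_⟩
    have hle := sum_mul_add_mul_cubeDist_le hx.1 fun j => hi j (Finset.mem_univ j)
    have hdist := mul_le_mul_of_nonneg_left (hx.2 T hodd) (abs_nonneg (c i))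
    linarith

lemma finite_evenVertices : (evenVertices ι).Finite :=
  (Set.finite_range fun S : Finset ι => fun i => if i ∈ S then (1 : ℝ) else 0).subset
    fun _ ⟨S, _, hS⟩ => ⟨S, hS.symm⟩

theorem parityCube_eq_convexHull : parityCube ι = convexHull ℝ (evenVertices ι) :=
  Set.Subset.antisymm
    (fun _ hx => mem_convexHull_of_forall_exists_le finite_evenVertices
      (exists_mem_evenVertices_sum_mul_le hx))
    (convexHull_min evenVertices_subset_parityCube convex_parityCube)

end ParityCube

section Restrict

variable {α : Type*} [DecidableEq α] {s : Finset α}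

omit [DecidableEq α] in
lemma map_subtype_subset_self (S : Finset s) : S.map (.subtype (· ∈ s)) ⊆ s := by
  intro i hi
  obtain ⟨a, -, rfl⟩ := Finset.mem_map.1 hi
  exact a.2

lemma forall_map_subtype_iff {P : Finset α → Prop} :
    (∀ S : Finset s, P (S.map (.subtype (· ∈ s)))) ↔ ∀ S ⊆ s, P S :=
  ⟨fun h S hS => by simpa [Finset.subtype_map_of_mem hS] using h (S.subtype (· ∈ s)),
    fun h S => h _ (map_subtype_subset_self S)⟩

lemma map_subtype_compl (S : Finset s) :
    Sᶜ.map (.subtype (· ∈ s)) = s \ S.map (.subtype (· ∈ s)) := by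
  ext i
  simp only [Finset.mem_map, Finset.mem_compl, Finset.mem_sdiff, Function.Embedding.subtype_apply,
    Subtype.exists, exists_and_right, exists_eq_right]
  aesop

lemma cubeDist_restrict (f : α → ℝ) (S : Finset s) :
    cubeDist (fun i : s => f i) S =
      ∑ j ∈ S.map (.subtype (· ∈ s)), (1 - f j) + ∑ j ∈ s \ S.map (.subtype (· ∈ s)), f j := by
  rw [cubeDist, ← map_subtype_compl, Finset.sum_map, Finset.sum_map]
  rfl

lemma sum_add_sum_sdiff_one_sub {S : Finset α} (hS : S ⊆ s) (f : α → ℝ) :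
    ∑ j ∈ S, f j + ∑ j ∈ s \ S, (1 - f j) = s.card - (∑ j ∈ S, (1 - f j) + ∑ j ∈ s \ S, f j) := by
  have hcard : ((s \ S).card : ℝ) + S.card = s.card := by
    exact_mod_cast Finset.card_sdiff_add_card_eq_card hS
  simp only [Finset.sum_sub_distrib, Finset.sum_const, nsmul_eq_mul, mul_one]
  linarith

lemma restrict_mem_parityCube_iff {f : α → ℝ} :
    (fun i : s => f i) ∈ parityCube s ↔ (∀ i ∈ s, f i ∈ Set.Icc (0 : ℝ) 1) ∧
      ∀ S ⊆ s, Odd S.card → ∑ j ∈ S, f j + ∑ j ∈ s \ S, (1 - f j) ≤ s.card - 1 := by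
  refine and_congr Subtype.forall (Iff.trans (forall_congr' fun S => ?_) forall_map_subtype_iff)
  rw [Finset.card_map, cubeDist_restrict, sum_add_sum_sdiff_one_sub (map_subtype_subset_self S)]
  exact imp_congr_right fun _ => by constructor <;> intro h <;> linarith

end Restrict

theorem stmt13_general {n : ℕ} (t : Fin n → ZMod 2) :
    parityPolytope t = {f | (∀ i, f i ∈ Set.Icc (0:ℝ) 1) ∧
      (fun i : {i // i ∈ SuppZ t} => f i.1) ∈
        convexHull ℝ {g : {i // i ∈ SuppZ t} → ℝ |
          ∃ S : Finset {i // i ∈ SuppZ t}, Even S.card ∧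
            g = fun i => if i ∈ S then 1 else 0}} := by
  ext f
  have hcube := restrict_mem_parityCube_iff (s := SuppZ t) (f := f)
  rw [parityCube_eq_convexHull] at hcube
  exact ⟨fun ⟨h01, h⟩ => ⟨h01, hcube.2 ⟨fun i _ => h01 i, h⟩⟩, fun ⟨h01, h⟩ => ⟨h01, (hcube.1 h).2⟩⟩

theorem stmt13 {n : ℕ} (t : Fin n → ZMod 2) (hcard : 1 ≤ (SuppZ t).card) :
    parityPolytope t = {f | (∀ i, f i ∈ Set.Icc (0:ℝ) 1) ∧
      (fun i : {i // i ∈ SuppZ t} => f i.1) ∈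
        convexHull ℝ {g : {i // i ∈ SuppZ t} → ℝ |
          ∃ S : Finset {i // i ∈ SuppZ t}, Even S.card ∧
            g = fun i => if i ∈ S then 1 else 0}} :=
  stmt13_general t
end

section
/- Let U be a matrix over F_2 in row echelon form obtained from H^Q (after a column permutation placing columns indexed by Supp(p)\{τ_1} first in decreasing order of p-value), and let u_i be its i-th row mapped back by the inverse permutation. If u_{i,τ_1} = 1 then |Supp(u_i) ∩ Supp(p)| ≤ |Supp(p)| − i + 1, where τ_1 is the index of the largest entry of p. -/
open Finset

/-! Pulled back along `τ`, an index of `Supp u ∩ Supp p` lies below `|Supp p|` (as `p` is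
supported on the first `|Supp p|` positions) and is either `0` or at least `i` (row echelon
form), leaving at most `|Supp p| - i + 1` possibilities. -/

theorem card_le_sub_add_one_of_forall_mem {s : Finset ℕ} {i c : ℕ}
    (h : ∀ k ∈ s, k < c ∧ (k = 0 ∨ i ≤ k)) : #s ≤ c - i + 1 :=
  calc #s ≤ #(insert 0 (Ico i c)) := card_le_card fun k hk => by
        obtain ⟨hkc, rfl | hik⟩ := h k hk
        · exact mem_insert_self _ _
        · exact mem_insert_of_mem (mem_Ico.2 ⟨hik, hkc⟩)
    _ ≤ #(Ico i c) + 1 := card_insert_le _ _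
    _ = c - i + 1 := by rw [Nat.card_Ico]

theorem stmt16_general {n : ℕ} (p : Fin n → ℝ)
    (τ : Equiv.Perm (Fin n))
    (hsupp : ∀ j, j ∈ SuppR p ↔ ∃ k : Fin n, (k : ℕ) < (SuppR p).card ∧ τ k = j)
    (u : Fin n → ZMod 2) (i : ℕ)
    (hech : ∀ k : Fin n, 1 ≤ (k : ℕ) → (k : ℕ) < i → u (τ k) = 0) :
    (SuppZ u ∩ SuppR p).card ≤ (SuppR p).card - i + 1 := by
  rw [← card_map (τ.symm.toEmbedding.trans Fin.valEmbedding)]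
  refine card_le_sub_add_one_of_forall_mem ?_
  simp only [mem_map, Function.Embedding.trans_apply, Equiv.coe_toEmbedding,
    Fin.valEmbedding_apply]
  rintro _ ⟨j, hj, rfl⟩
  obtain ⟨hju, hjp⟩ := mem_inter.1 hj
  obtain ⟨k, hkc, rfl⟩ := (hsupp j).1 hjp
  rw [Equiv.symm_apply_apply]
  refine ⟨hkc, ?_⟩
  by_contra! hk
  exact (mem_filter.1 hju).2 (hech k (Nat.one_le_iff_ne_zero.2 hk.1) hk.2)

theorem stmt16 {n : ℕ} (hn : 0 < n) (p : Fin n → ℝ) (hp : ∀ i, 0 ≤ p i)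
    (τ : Equiv.Perm (Fin n))
    (hsort : ∀ a b : Fin n, a ≤ b → p (τ b) ≤ p (τ a))
    (hsupp : ∀ j, j ∈ SuppR p ↔ ∃ k : Fin n, (k : ℕ) < (SuppR p).card ∧ τ k = j)
    (u : Fin n → ZMod 2) (i : ℕ) (hi : 1 ≤ i)
    (hech : ∀ k : Fin n, 1 ≤ (k : ℕ) → (k : ℕ) < i → u (τ k) = 0)
    (hlead : u (τ ⟨0, hn⟩) = 1) :
    (SuppZ u ∩ SuppR p).card ≤ (SuppR p).card - i + 1 :=
  stmt16_general p τ hsupp u i hech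
end
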